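/- Let X, Y be real Banach spaces, T ∈ B(X,Y) with a quasi-linear projector generalized inverse T^H : Y → X, and let δT ∈ B(X,Y) be such that T^H is quasi-additive on R(δT). Put T̄ = T + δT. Then the following are equivalent: (1) I_X + T^H δT is invertible in B(X,X) and R(T̄) ∩ N(T^H) = {0}; (2) I_X + T^H δT is invertible in B(X,X) and Υ = T^H ∘ (I_Y + δT T^H)^{-1} = (I_X + T^H δT)^{-1} ∘ T^H is a quasi-linear projector generalized inverse of T̄; (3) X = N(T̄) + R(T^H) with N(T̄) ∩ R(T^H) = {0}, and Y = R(T̄) + N(T^H) with R(T̄) ∩ N(T^H) = {0}. -/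

import Mathlib

open Metric Set

variable {X Y : Type*} [NormedAddCommGroup X] [NormedSpace ℝ X]
  [NormedAddCommGroup Y] [NormedSpace ℝ Y]

/-- `F` is a bounded homogeneous operator: `F (c • x) = c • F x` for all real `c`,
and `F` maps bounded sets to bounded sets (equivalently, `‖F x‖ ≤ M * ‖x‖`). -/
def BddHomOp (F : X → Y) : Prop :=
  (∀ (c : ℝ) (x : X), F (c • x) = c • F x) ∧ ∃ M : ℝ, ∀ x, ‖F x‖ ≤ M * ‖x‖

/-- The norm of a (homogeneous) map: `sup {‖F x‖ : ‖x‖ = 1}`. -/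
noncomputable def hnorm (F : X → Y) : ℝ :=
  sSup ((fun x => ‖F x‖) '' {x : X | ‖x‖ = 1})

/-- `F` is quasi-additive on the subset `M`. -/
def QuasiAdditiveOn (F : X → Y) (M : Set X) : Prop :=
  ∀ x : X, ∀ z ∈ M, F (x + z) = F x + F z

/-- `S` is a bounded homogeneous generalized inverse of `T`: `T S T = T` and `S T S = S`. -/
def GenInv (T : X →L[ℝ] Y) (S : Y → X) : Prop :=
  BddHomOp S ∧ (∀ x, T (S (T x)) = T x) ∧ (∀ y, S (T (S y)) = S y)

/-- A subset `V` is Chebyshev: every point has a unique nearest point in `V`. -/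
def IsChebyshev (V : Set X) : Prop :=
  ∀ x : X, ∃! v, v ∈ V ∧ ‖x - v‖ = Metric.infDist x V

/-- `p` is the metric projector onto `V`: `p x ∈ V` is a nearest point to `x` in `V`. -/
def IsMetricProjOn (V : Set X) (p : X → X) : Prop :=
  ∀ x, p x ∈ V ∧ ‖x - p x‖ = Metric.infDist x V

/-- `TH` is a quasi-linear projector generalized inverse of `T`. -/
def QLPGenInv (T : X →L[ℝ] Y) (TH : Y → X) : Prop :=
  BddHomOp TH ∧ (∀ x, T (TH (T x)) = T x) ∧ (∀ y, TH (T (TH y)) = TH y) ∧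
  (∃ P : X →L[ℝ] X, (∀ x, P (P x) = P x) ∧ Set.range ⇑P = {x : X | T x = 0} ∧
    ∀ x, TH (T x) = x - P x) ∧
  (∃ Q : Y → Y, BddHomOp Q ∧ (∀ y, Q (Q y) = Q y) ∧ QuasiAdditiveOn Q (Set.range Q) ∧
    Set.range Q = Set.range ⇑T ∧ ∀ y, T (TH y) = Q y)

/-! Write `P = I - T^H T` for the projector onto `N(T)` and `A = I + T^H δT`. Quasi-additivity
gives `T^H (T + δT) = A - P` on `X`, and `P A = P` because `P T^H = 0`.

A bounded homogeneous generalized inverse `S` of a bounded linear map that is quasi-additive on its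
range is automatically a quasi-linear projector generalized inverse (with projectors `I - S T`
and `T S`), and it splits `X = N(T) ⊕ R(S)` and `Y = R(T) ⊕ N(S)`.

(1 ⇒ 2) If `A` is invertible, `T^H (T + δT) (A⁻¹ P x) = P x - P A⁻¹ P x = 0`, so the condition
`R(T̄) ∩ N(T^H) = 0` puts `A⁻¹ P` into `N(T̄)`; this makes `A⁻¹ T^H` a generalized inverse of `T̄`.
(2 ⇒ 3) `A⁻¹ T^H = T^H Ψ` has the same range and kernel as `T^H`.
(3 ⇒ 1) The two splittings make `A` injective and surjective (`A = P` on `N(T̄)`, and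
`P (N(T̄)) = R(P)`), so `A` is invertible by the open mapping theorem. -/

variable {Z : Type*} [NormedAddCommGroup Z] [NormedSpace ℝ Z]

namespace BddHomOp

variable {F : Y → Z}

theorem map_zero (hF : BddHomOp F) : F 0 = 0 := by
  simpa using hF.1 0 0

theorem map_neg (hF : BddHomOp F) (y : Y) : F (-y) = -F y := by
  simpa using hF.1 (-1) y

theorem clm_comp (hF : BddHomOp F) (L : Z →L[ℝ] X) : BddHomOp (L ∘ F) := by
  obtain ⟨hsmul, M, hM⟩ := hF
  refine ⟨fun c y => by simp [hsmul], ‖L‖ * M, fun y => ?_⟩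
  calc ‖L (F y)‖ ≤ ‖L‖ * ‖F y‖ := L.le_opNorm _
    _ ≤ ‖L‖ * (M * ‖y‖) := by gcongr; exact hM y
    _ = ‖L‖ * M * ‖y‖ := by ring

noncomputable def compCLM (hF : BddHomOp F) (L : X →L[ℝ] Y)
    (hq : QuasiAdditiveOn F (range L)) : X →L[ℝ] Z :=
  LinearMap.mkContinuousOfExistsBound
    { toFun := fun x => F (L x)
      map_add' := fun x z => by rw [L.map_add]; exact hq _ _ ⟨z, rfl⟩
      map_smul' := fun c x => by rw [L.map_smul]; exact hF.1 c _ }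
    (by
      obtain ⟨M, hM⟩ := hF.2
      refine ⟨max M 0 * ‖L‖, fun x => ?_⟩
      calc ‖F (L x)‖ ≤ M * ‖L x‖ := hM _
        _ ≤ max M 0 * (‖L‖ * ‖x‖) := by
          gcongr
          exacts [le_max_left M 0, L.le_opNorm x]
        _ = max M 0 * ‖L‖ * ‖x‖ := by ring)

end BddHomOp

namespace GenInv

variable {T : X →L[ℝ] Y} {S : Y → X}

theorem exists_mem_ker_add_mem_range (h : GenInv T S) (x : X) :
    ∃ u ∈ {z | T z = 0}, ∃ v ∈ range S, x = u + v :=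
  ⟨x - S (T x), by simp only [mem_ofPred_eq, map_sub, h.2.1, sub_self], S (T x),
    mem_range_self _, (sub_add_cancel x _).symm⟩

theorem ker_inter_range (h : GenInv T S) : {z | T z = 0} ∩ range S = {0} := by
  refine Subset.antisymm ?_ (singleton_subset_iff.2 ⟨map_zero T, 0, h.1.map_zero⟩)
  rintro _ ⟨hz, y, rfl⟩
  rw [mem_singleton_iff, ← h.2.2, hz, h.1.map_zero]

theorem exists_mem_range_add_mem_ker (h : GenInv T S) (hq : QuasiAdditiveOn S (range T))
    (y : Y) : ∃ u ∈ range T, ∃ v ∈ {w | S w = 0}, y = u + v := by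
  refine ⟨T (S y), mem_range_self _, y - T (S y), ?_, (add_sub_cancel _ _).symm⟩
  rw [mem_ofPred_eq, sub_eq_add_neg, ← map_neg, hq _ _ (mem_range_self _), map_neg, h.1.map_neg,
    h.2.2, add_neg_cancel]

theorem range_inter_ker (h : GenInv T S) : range T ∩ {w | S w = 0} = {0} := by
  refine Subset.antisymm ?_ (singleton_subset_iff.2 ⟨⟨0, map_zero T⟩, h.1.map_zero⟩)
  rintro _ ⟨⟨x, rfl⟩, hx : S (T x) = 0⟩
  rw [mem_singleton_iff, ← h.2.1, hx, map_zero]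

noncomputable def kerProj (h : GenInv T S) (hq : QuasiAdditiveOn S (range T)) : X →L[ℝ] X :=
  1 - h.1.compCLM T hq

variable (h : GenInv T S) (hq : QuasiAdditiveOn S (range T))
include h hq

theorem kerProj_apply (x : X) : h.kerProj hq x = x - S (T x) :=
  rfl

theorem apply_kerProj (x : X) : T (h.kerProj hq x) = 0 := by
  rw [kerProj_apply, map_sub, h.2.1, sub_self]

theorem kerProj_eq_self_of_apply_eq_zero {x : X} (hx : T x = 0) : h.kerProj hq x = x := by
  rw [kerProj_apply, hx, h.1.map_zero, sub_zero]

theorem kerProj_eq_zero_of_mem_range {x : X} (hx : x ∈ range S) : h.kerProj hq x = 0 := by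
  obtain ⟨y, rfl⟩ := hx
  rw [kerProj_apply, h.2.2, sub_self]

theorem kerProj_kerProj (x : X) : h.kerProj hq (h.kerProj hq x) = h.kerProj hq x :=
  h.kerProj_eq_self_of_apply_eq_zero hq (h.apply_kerProj hq x)

theorem range_kerProj : range (h.kerProj hq) = {x | T x = 0} :=
  Subset.antisymm (range_subset_iff.2 (h.apply_kerProj hq))
    fun x hx => ⟨x, h.kerProj_eq_self_of_apply_eq_zero hq hx⟩

theorem qlpGenInv : QLPGenInv T S := by
  refine ⟨h.1, h.2.1, h.2.2, ⟨h.kerProj hq, h.kerProj_kerProj hq, h.range_kerProj hq,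
    fun x => by rw [kerProj_apply, sub_sub_cancel]⟩, T ∘ S, h.1.clm_comp T,
    fun y => congrArg T (h.2.2 y), ?_, ?_, fun y => rfl⟩
  · rintro a _ ⟨w, rfl⟩
    simp only [Function.comp_apply, hq a _ ⟨_, rfl⟩, map_add]
  · exact Subset.antisymm (range_comp_subset_range S T)
      fun y ⟨x, hx⟩ => ⟨T x, by rw [← hx]; exact h.2.1 x⟩

end GenInv

theorem QLPGenInv.quasiAdditiveOn_range {T : X →L[ℝ] Y} {S : Y → X} (h : QLPGenInv T S) :
    QuasiAdditiveOn S (range T) := by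
  obtain ⟨-, hTST, hSTS, ⟨P, -, -, hST⟩, ⟨Q, -, -, hQadd, hQrange, hTS⟩⟩ := h
  have hSQ : ∀ y, S (Q y) = S y := fun y => by rw [← hTS, hSTS]
  rintro a _ ⟨x, rfl⟩
  obtain ⟨u, hu⟩ : Q a ∈ range T := hQrange ▸ mem_range_self a
  have hQT : Q (T x) = T x := by rw [← hTS, hTST]
  calc S (a + T x) = S (Q (a + T x)) := (hSQ _).symm
    _ = S (T (u + x)) := by rw [hQadd a _ (hQrange ▸ mem_range_self x), hQT, ← hu, map_add]
    _ = S (T u) + S (T x) := by rw [hST, hST, hST, map_add]; abel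
    _ = S a + S (T x) := by rw [hu, hSQ]

theorem qlpGenInv_iff {T : X →L[ℝ] Y} {S : Y → X} :
    QLPGenInv T S ↔ GenInv T S ∧ QuasiAdditiveOn S (range T) :=
  ⟨fun h => ⟨⟨h.1, h.2.1, h.2.2.1⟩, h.quasiAdditiveOn_range⟩, fun ⟨h, hq⟩ => h.qlpGenInv hq⟩

theorem ContinuousLinearMap.units_apply_inv_apply {R M : Type*} [Semiring R] [AddCommMonoid M]
    [TopologicalSpace M] [Module R M] (A : (M →L[R] M)ˣ) (x : M) :
    (A : M →L[R] M) ((↑A⁻¹ : M →L[R] M) x) = x := by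
  rw [← mul_apply_eq_comp, A.mul_inv, one_apply_eq_self]

theorem ContinuousLinearMap.units_inv_apply_apply {R M : Type*} [Semiring R] [AddCommMonoid M]
    [TopologicalSpace M] [Module R M] (A : (M →L[R] M)ˣ) (x : M) :
    (↑A⁻¹ : M →L[R] M) ((A : M →L[R] M) x) = x := by
  rw [← mul_apply_eq_comp, A.inv_mul, one_apply_eq_self]

omit [NormedSpace ℝ Z] in
theorem QuasiAdditiveOn.range_add {F : Y → Z} {L₁ L₂ : X →L[ℝ] Y}
    (h₁ : QuasiAdditiveOn F (range L₁)) (h₂ : QuasiAdditiveOn F (range L₂)) :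
    QuasiAdditiveOn F (range (L₁ + L₂)) := by
  rintro a _ ⟨x, rfl⟩
  simp only [add_apply]
  rw [← add_assoc, h₂ _ _ (mem_range_self x), h₁ _ _ (mem_range_self x),
    h₂ _ _ (mem_range_self x), add_assoc]

namespace GenInv

-- Throughout, `A` is the paper's `I_X + T^H δT`, pinned down by `hA`.
variable {T δT : X →L[ℝ] Y} {TH : Y → X} (hG : GenInv T TH)
  (hqT : QuasiAdditiveOn TH (range T)) (hq : QuasiAdditiveOn TH (range δT))
include hG hqT hq

theorem apply_add_apply_eq_perturb_sub_kerProj {A : X →L[ℝ] X} (hA : ∀ x, A x = x + TH (δT x))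
    (x : X) : TH ((T + δT) x) = A x - hG.kerProj hqT x := by
  rw [add_apply, hq _ _ (mem_range_self x), hA, kerProj_apply]
  abel

omit hq in
theorem kerProj_apply_perturb {A : X →L[ℝ] X} (hA : ∀ x, A x = x + TH (δT x)) (x : X) :
    hG.kerProj hqT (A x) = hG.kerProj hqT x := by
  rw [hA, map_add, hG.kerProj_eq_zero_of_mem_range hqT (mem_range_self _), add_zero]

omit hq in
theorem kerProj_apply_perturb_inv {A : (X →L[ℝ] X)ˣ} (hA : ∀ x, (A : X →L[ℝ] X) x = x + TH (δT x))
    (x : X) : hG.kerProj hqT ((↑A⁻¹ : X →L[ℝ] X) x) = hG.kerProj hqT x := by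
  rw [← hG.kerProj_apply_perturb hqT hA, ContinuousLinearMap.units_apply_inv_apply]

theorem apply_perturb_inv_kerProj_eq_zero {A : (X →L[ℝ] X)ˣ}
    (hA : ∀ x, (A : X →L[ℝ] X) x = x + TH (δT x))
    (hcap : range (T + δT) ∩ {w | TH w = 0} = {0}) (x : X) :
    (T + δT) ((↑A⁻¹ : X →L[ℝ] X) (hG.kerProj hqT x)) = 0 := by
  refine hcap.subset ⟨mem_range_self _, ?_⟩
  rw [mem_ofPred_eq, hG.apply_add_apply_eq_perturb_sub_kerProj hqT hq hA,
    ContinuousLinearMap.units_apply_inv_apply, hG.kerProj_apply_perturb_inv hqT hA,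
    kerProj_kerProj, sub_self]

theorem genInv_add {A : (X →L[ℝ] X)ˣ} (hA : ∀ x, (A : X →L[ℝ] X) x = x + TH (δT x))
    (hcap : range (T + δT) ∩ {w | TH w = 0} = {0}) :
    GenInv (T + δT) (fun y => (↑A⁻¹ : X →L[ℝ] X) (TH y)) := by
  have hST : ∀ x, (↑A⁻¹ : X →L[ℝ] X) (TH ((T + δT) x)) =
      x - (↑A⁻¹ : X →L[ℝ] X) (hG.kerProj hqT x) := fun x => by
    rw [hG.apply_add_apply_eq_perturb_sub_kerProj hqT hq hA, map_sub,
      ContinuousLinearMap.units_inv_apply_apply]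
  refine ⟨hG.1.clm_comp _, fun x => ?_, fun y => ?_⟩
  · dsimp only
    rw [hST, map_sub, hG.apply_perturb_inv_kerProj_eq_zero hqT hq hA hcap, sub_zero]
  · dsimp only
    rw [hST, hG.kerProj_apply_perturb_inv hqT hA,
      hG.kerProj_eq_zero_of_mem_range hqT (mem_range_self _), map_zero, sub_zero]

theorem exists_qlpGenInv_add {A : (X →L[ℝ] X)ˣ} (hA : ∀ x, (A : X →L[ℝ] X) x = x + TH (δT x))
    (hcap : range (T + δT) ∩ {w | TH w = 0} = {0}) :
    ∃ Ψ : Y → Y, (∀ y, Ψ y + δT (TH (Ψ y)) = y) ∧ (∀ y, Ψ (y + δT (TH y)) = y) ∧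
      (∀ y, TH (Ψ y) = (↑A⁻¹ : X →L[ℝ] X) (TH y)) ∧
      QLPGenInv (T + δT) (fun y => TH (Ψ y)) := by
  have hTHΨ : ∀ y, TH (y - δT ((↑A⁻¹ : X →L[ℝ] X) (TH y))) = (↑A⁻¹ : X →L[ℝ] X) (TH y) :=
    fun y => by
      have hv := ContinuousLinearMap.units_apply_inv_apply A (TH y)
      rw [hA] at hv
      rw [sub_eq_add_neg, ← map_neg, hq _ _ (mem_range_self _), map_neg, hG.1.map_neg,
        eq_sub_of_add_eq' hv, neg_sub, add_sub_cancel]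
  refine ⟨fun y => y - δT ((↑A⁻¹ : X →L[ℝ] X) (TH y)), fun y => ?_, fun y => ?_, hTHΨ, ?_⟩
  · simp only [hTHΨ, sub_add_cancel]
  · have hA' : TH (y + δT (TH y)) = (A : X →L[ℝ] X) (TH y) := by
      rw [hq _ _ (mem_range_self _), hA]
    simp only [hA', ContinuousLinearMap.units_inv_apply_apply, add_sub_cancel_right]
  · simp only [hTHΨ]
    exact qlpGenInv_iff.2 ⟨hG.genInv_add hqT hq hA hcap,
      fun a z hz => by simp only [hqT.range_add hq a z hz, map_add]⟩

theorem injective_perturb {A : X →L[ℝ] X} (hA : ∀ x, A x = x + TH (δT x))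
    (hXcap : {z | (T + δT) z = 0} ∩ range TH = {0})
    (hYcap : range (T + δT) ∩ {w | TH w = 0} = {0}) : Function.Injective A := by
  refine (injective_iff_map_eq_zero A).2 fun z hz => ?_
  have hPz : hG.kerProj hqT z = 0 := by
    have := hG.kerProj_eq_zero_of_mem_range hqT (mem_range_self ((T + δT) z))
    rwa [hG.apply_add_apply_eq_perturb_sub_kerProj hqT hq hA, hz, zero_sub, map_neg,
      kerProj_kerProj, neg_eq_zero] at this
  have hT'z : (T + δT) z = 0 := hYcap.subset ⟨mem_range_self z, by
    rw [mem_ofPred_eq, hG.apply_add_apply_eq_perturb_sub_kerProj hqT hq hA, hz, hPz, sub_zero]⟩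
  have hzTH : z ∈ range TH := ⟨δT (-z), by
    rw [map_neg, hG.1.map_neg, neg_eq_iff_add_eq_zero, add_comm, ← hA, hz]⟩
  exact hXcap.subset ⟨hT'z, hzTH⟩

theorem surjective_perturb {A : X →L[ℝ] X} (hA : ∀ x, A x = x + TH (δT x))
    (hXsum : ∀ x : X, ∃ u ∈ {z : X | (T + δT) z = 0}, ∃ v ∈ range TH, x = u + v)
    (hYsum : ∀ y : Y, ∃ u ∈ range (T + δT), ∃ v ∈ {w : Y | TH w = 0}, y = u + v) :
    Function.Surjective A := by
  set P := hG.kerProj hqT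
  have hAker : ∀ u, (T + δT) u = 0 → A u = P u := fun u hu => by
    have := hG.apply_add_apply_eq_perturb_sub_kerProj hqT hq hA u
    rw [hu, hG.1.map_zero] at this
    exact sub_eq_zero.1 this.symm
  have hPker : ∀ w, ∃ u, (T + δT) u = 0 ∧ P u = P w := fun w => by
    obtain ⟨u, hu, v, hv, hw⟩ := hXsum (P w)
    refine ⟨u, hu, ?_⟩
    rw [← kerProj_kerProj hG hqT w, hw, map_add, hG.kerProj_eq_zero_of_mem_range hqT hv, add_zero]
  intro x
  obtain ⟨_, ⟨u, rfl⟩, w, hw : TH w = 0, hTx⟩ := hYsum (T x)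
  have hx : x - P x = A u - P u :=
    calc x - P x = TH (T x) := by rw [kerProj_apply, sub_sub_cancel]
      _ = TH ((T + δT) u) := by
        rw [hTx, add_comm, hqT.range_add hq _ _ (mem_range_self u), hw, zero_add]
      _ = A u - P u := hG.apply_add_apply_eq_perturb_sub_kerProj hqT hq hA u
  obtain ⟨v, hv, hPv⟩ := hPker (x - u)
  refine ⟨u + v, ?_⟩
  calc A (u + v) = (A u - P u) + P x := by rw [map_add, hAker v hv, hPv, map_sub]; abel
    _ = x := by rw [← hx, sub_add_cancel]

end GenInv

theorem QLPGenInv.ker_range_complements_of_comp {T' δT : X →L[ℝ] Y} {TH : Y → X} {Ψ : Y → Y}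
    {E : X →L[ℝ] X} (hE : Function.Injective E) (hΨ : ∀ y, Ψ (y + δT (TH y)) = y)
    (hTHΨ : ∀ y, TH (Ψ y) = E (TH y)) (h : QLPGenInv T' (fun y => TH (Ψ y))) :
    ((∀ x : X, ∃ u ∈ {z : X | T' z = 0}, ∃ v ∈ range TH, x = u + v) ∧
        {z : X | T' z = 0} ∩ range TH = {0}) ∧
      ((∀ y : Y, ∃ u ∈ range T', ∃ v ∈ {w : Y | TH w = 0}, y = u + v) ∧
        range T' ∩ {w : Y | TH w = 0} = {0}) := by
  obtain ⟨hG, hq⟩ := qlpGenInv_iff.1 h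
  have hrange : range (fun y => TH (Ψ y)) = range TH :=
    Subset.antisymm (range_subset_iff.2 fun y => mem_range_self _)
      (range_subset_iff.2 fun y => ⟨y + δT (TH y), by simp only [hΨ]⟩)
  have hker : {w | TH (Ψ w) = 0} = {w | TH w = 0} := by
    ext w
    rw [mem_ofPred_eq, mem_ofPred_eq, hTHΨ, map_eq_zero_iff E hE]
  rw [← hrange, ← hker]
  exact ⟨⟨hG.exists_mem_ker_add_mem_range, hG.ker_inter_range⟩,
    hG.exists_mem_range_add_mem_ker hq, hG.range_inter_ker⟩

theorem stmt_15_general [CompleteSpace X] (T δT : X →L[ℝ] Y)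
    (TH : Y → X) (hTH : QLPGenInv T TH)
    (hq : QuasiAdditiveOn TH (Set.range ⇑δT)) :
    [ (∃ A : (X →L[ℝ] X)ˣ, ∀ x, (A : X →L[ℝ] X) x = x + TH (δT x)) ∧
        Set.range ⇑(T + δT) ∩ {w : Y | TH w = 0} = {0},
      ∃ A : (X →L[ℝ] X)ˣ, (∀ x, (A : X →L[ℝ] X) x = x + TH (δT x)) ∧
        ∃ Ψ : Y → Y, (∀ y, Ψ y + δT (TH (Ψ y)) = y) ∧ (∀ y, Ψ (y + δT (TH y)) = y) ∧
          (∀ y, TH (Ψ y) = (↑A⁻¹ : X →L[ℝ] X) (TH y)) ∧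
          QLPGenInv (T + δT) (fun y => TH (Ψ y)),
      ((∀ x : X, ∃ u ∈ {z : X | (T + δT) z = 0}, ∃ v ∈ Set.range TH, x = u + v) ∧
        {z : X | (T + δT) z = 0} ∩ Set.range TH = {0}) ∧
      ((∀ y : Y, ∃ u ∈ Set.range ⇑(T + δT), ∃ v ∈ {w : Y | TH w = 0}, y = u + v) ∧
        Set.range ⇑(T + δT) ∩ {w : Y | TH w = 0} = {0}) ].TFAE := by
  obtain ⟨hG, hqT⟩ := qlpGenInv_iff.1 hTH
  tfae_have 1 → 2 := fun ⟨⟨A, hA⟩, hcap⟩ => ⟨A, hA, hG.exists_qlpGenInv_add hqT hq hA hcap⟩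
  tfae_have 2 → 3 := fun ⟨A, _, _, _, hΨ, hTHΨ, h⟩ => h.ker_range_complements_of_comp
    (Function.LeftInverse.injective (ContinuousLinearMap.units_apply_inv_apply A)) hΨ hTHΨ
  tfae_have 3 → 1 := by
    rintro ⟨⟨hXsum, hXcap⟩, hYsum, hYcap⟩
    have hA : ∀ x, (1 + hG.1.compCLM δT hq) x = x + TH (δT x) := fun x => rfl
    obtain ⟨A, hA'⟩ := ContinuousLinearMap.isUnit_iff_bijective.2
      ⟨hG.injective_perturb hqT hq hA hXcap hYcap, hG.surjective_perturb hqT hq hA hXsum hYsum⟩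
    exact ⟨⟨A, hA' ▸ hA⟩, hYcap⟩
  tfae_finish

theorem stmt_15 [CompleteSpace X] [CompleteSpace Y] (T δT : X →L[ℝ] Y)
    (TH : Y → X) (hTH : QLPGenInv T TH)
    (hq : QuasiAdditiveOn TH (Set.range ⇑δT)) :
    [ (∃ A : (X →L[ℝ] X)ˣ, ∀ x, (A : X →L[ℝ] X) x = x + TH (δT x)) ∧
        Set.range ⇑(T + δT) ∩ {w : Y | TH w = 0} = {0},
      ∃ A : (X →L[ℝ] X)ˣ, (∀ x, (A : X →L[ℝ] X) x = x + TH (δT x)) ∧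
        ∃ Ψ : Y → Y, (∀ y, Ψ y + δT (TH (Ψ y)) = y) ∧ (∀ y, Ψ (y + δT (TH y)) = y) ∧
          (∀ y, TH (Ψ y) = (↑A⁻¹ : X →L[ℝ] X) (TH y)) ∧
          QLPGenInv (T + δT) (fun y => TH (Ψ y)),
      ((∀ x : X, ∃ u ∈ {z : X | (T + δT) z = 0}, ∃ v ∈ Set.range TH, x = u + v) ∧
        {z : X | (T + δT) z = 0} ∩ Set.range TH = {0}) ∧
      ((∀ y : Y, ∃ u ∈ Set.range ⇑(T + δT), ∃ v ∈ {w : Y | TH w = 0}, y = u + v) ∧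
        Set.range ⇑(T + δT) ∩ {w : Y | TH w = 0} = {0}) ].TFAE :=
  stmt_15_general T δT TH hTH hq
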